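/- arXiv:1212.1420 — 3 statements merged into one kernel-verified Lean document; each statement's English description precedes it below -/
import Mathlib

section
/- If f'' : [a,b] → ℝ is absolutely continuous with f''' integrable on [a,b], then ∫_a^b f(x) dx - ((b-a)/6)(f(a) + 4f((a+b)/2) + f(b)) = (b-a)^4 ∫_0^1 p(t) f'''(ta + (1-t)b) dt, where p(t) = (1/6)t^2(t - 1/2) for t ∈ [0,1/2] and p(t) = (1/6)(t-1)^2(t - 1/2) for t ∈ (1/2,1]. -/
/-!
After the substitution `x = t * a + (1 - t) * b` everything lives on `[0, 1]`, where
`g t = f (t * a + (1 - t) * b)` has third derivative `(a - b) ^ 3 * f''' (t * a + (1 - t) * b)`.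
On each of `[0, 1/2]` and `[1/2, 1]` the kernel is a cubic, and three integrations by parts
against `g'''` leave boundary terms and `-∫ g`. Both cubics and their first derivatives vanish
at `0` and `1` and agree at `1/2`, so only the terms in `g` survive: the second derivative of
the kernel is `∓1/6` at the endpoints and jumps by `2/3` at `1/2`, which are Simpson's weights.
-/

open MeasureTheory intervalIntegral Set

theorem integral_mul_deriv_three_eq {P P₁ P₂ P₃ g g₁ g₂ g₃ : ℝ → ℝ} {c d : ℝ}
    (hP : ∀ x ∈ uIcc c d, HasDerivAt P (P₁ x) x) (hP₁ : ∀ x ∈ uIcc c d, HasDerivAt P₁ (P₂ x) x)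
    (hP₂ : ∀ x ∈ uIcc c d, HasDerivAt P₂ (P₃ x) x) (hP₃ : IntervalIntegrable P₃ volume c d)
    (hg : ∀ x ∈ uIcc c d, HasDerivAt g (g₁ x) x) (hg₁ : ∀ x ∈ uIcc c d, HasDerivAt g₁ (g₂ x) x)
    (hg₂ : ∀ x ∈ uIcc c d, HasDerivAt g₂ (g₃ x) x) (hg₃ : IntervalIntegrable g₃ volume c d) :
    ∫ x in c..d, P x * g₃ x =
      (P d * g₂ d - P₁ d * g₁ d + P₂ d * g d) - (P c * g₂ c - P₁ c * g₁ c + P₂ c * g c)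
        - ∫ x in c..d, P₃ x * g x := by
  have integrable {u u' : ℝ → ℝ} (hu : ∀ x ∈ uIcc c d, HasDerivAt u (u' x) x) :
      IntervalIntegrable u volume c d :=
    (HasDerivAt.continuousOn hu).intervalIntegrable
  rw [integral_mul_deriv_eq_deriv_mul hP hg₂ (integrable hP₁) hg₃,
    integral_mul_deriv_eq_deriv_mul hP₁ hg₁ (integrable hP₂) (integrable hg₂),
    integral_mul_deriv_eq_deriv_mul hP₂ hg hP₃ (integrable hg₁)]
  ring

theorem mul_add_one_sub_mul_mem_uIcc {a b t : ℝ} (ht : t ∈ Icc (0:ℝ) 1) :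
    t * a + (1 - t) * b ∈ uIcc a b := by
  rw [← segment_eq_uIcc]
  exact ⟨t, 1 - t, ht.1, sub_nonneg.mpr ht.2, by ring, by simp only [smul_eq_mul]⟩

theorem hasDerivAt_comp_segment {f f' : ℝ → ℝ} {a b t : ℝ}
    (hf : ∀ x ∈ uIcc a b, HasDerivAt f (f' x) x) (ht : t ∈ Icc (0:ℝ) 1) :
    HasDerivAt (fun s => f (s * a + (1 - s) * b)) ((a - b) * f' (t * a + (1 - t) * b)) t := by
  have hφ : HasDerivAt (fun s : ℝ => s * a + (1 - s) * b) (a - b) t :=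
    (((hasDerivAt_id t).mul_const a).add (((hasDerivAt_id t).const_sub 1).mul_const b)).congr_deriv
      (by simp; ring)
  rw [mul_comm]
  exact (hf _ (mul_add_one_sub_mul_mem_uIcc ht)).comp t hφ

theorem intervalIntegrable_comp_segment {g : ℝ → ℝ} {a b : ℝ}
    (hg : IntervalIntegrable g volume a b) :
    IntervalIntegrable (fun t => g (t * a + (1 - t) * b)) volume 0 1 := by
  rcases eq_or_ne a b with rfl | hab
  · simp only [← add_mul, add_sub_cancel, one_mul]
    exact intervalIntegrable_const
  have := (hg.symm.comp_add_right b).comp_mul_left (c := a - b)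
  rw [sub_self, zero_div, div_self (sub_ne_zero.mpr hab)] at this
  convert this using 3 with t
  ring

theorem integral_comp_segment (f : ℝ → ℝ) (a b : ℝ) :
    (b - a) * ∫ t in (0:ℝ)..1, f (t * a + (1 - t) * b) = ∫ x in a..b, f x := by
  have := smul_integral_comp_mul_add (f := f) (a := 0) (b := 1) (a - b) b
  simp only [mul_zero, zero_add, mul_one, sub_add_cancel, smul_eq_mul] at this
  rw [integral_symm b, ← this, ← neg_mul, neg_sub]
  congr 1
  exact integral_congr fun t _ => by congr 1; ring

noncomputable def simpsonKernel (t : ℝ) : ℝ :=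
  if t ≤ 1 / 2 then (1 / 6) * t ^ 2 * (t - 1 / 2) else (1 / 6) * (t - 1) ^ 2 * (t - 1 / 2)

theorem simpsonKernel_of_le {t : ℝ} (ht : t ≤ 1 / 2) :
    simpsonKernel t = 1 / 6 * t ^ 2 * (t - 1 / 2) :=
  if_pos ht

theorem simpsonKernel_of_ge {t : ℝ} (ht : 1 / 2 ≤ t) :
    simpsonKernel t = 1 / 6 * (t - 1) ^ 2 * (t - 1 / 2) := by
  rcases ht.eq_or_lt with rfl | ht
  · norm_num [simpsonKernel]
  · exact if_neg (not_le.mpr ht)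

theorem continuous_simpsonKernel : Continuous simpsonKernel :=
  Continuous.if_le (by fun_prop) (by fun_prop) continuous_id continuous_const
    fun t ht => by norm_num [ht]

theorem integral_zero_half_simpsonKernel_mul {g g₁ g₂ g₃ : ℝ → ℝ}
    (hg : ∀ x ∈ uIcc (0:ℝ) (1 / 2), HasDerivAt g (g₁ x) x)
    (hg₁ : ∀ x ∈ uIcc (0:ℝ) (1 / 2), HasDerivAt g₁ (g₂ x) x)
    (hg₂ : ∀ x ∈ uIcc (0:ℝ) (1 / 2), HasDerivAt g₂ (g₃ x) x)
    (hg₃ : IntervalIntegrable g₃ volume 0 (1 / 2)) :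
    ∫ t in (0:ℝ)..1 / 2, simpsonKernel t * g₃ t
      = g 0 / 6 + g (1 / 2) / 3 - g₁ (1 / 2) / 24 - ∫ t in (0:ℝ)..1 / 2, g t := by
  calc ∫ t in (0:ℝ)..1 / 2, simpsonKernel t * g₃ t
      = ∫ t in (0:ℝ)..1 / 2, (1 / 6 * t ^ 2 * (t - 1 / 2)) * g₃ t :=
        integral_congr fun t ht => by
          rw [uIcc_of_le (by norm_num)] at ht
          rw [simpsonKernel_of_le ht.2]
    _ = _ := by
      rw [integral_mul_deriv_three_eq (P := fun t => 1 / 6 * t ^ 2 * (t - 1 / 2))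
        (P₁ := fun t => t ^ 2 / 2 - t / 6) (P₂ := fun t => t - 1 / 6) (P₃ := fun _ => 1)
        (fun x _ => (((hasDerivAt_pow 2 x).const_mul (1 / 6)).mul
          ((hasDerivAt_id x).sub_const (1 / 2))).congr_deriv (by simp; ring))
        (fun x _ => (((hasDerivAt_pow 2 x).div_const 2).sub
          ((hasDerivAt_id x).div_const 6)).congr_deriv (by simp))
        (fun x _ => (hasDerivAt_id x).sub_const _) intervalIntegrable_const hg hg₁ hg₂ hg₃]
      norm_num
      ring

theorem integral_half_one_simpsonKernel_mul {g g₁ g₂ g₃ : ℝ → ℝ}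
    (hg : ∀ x ∈ uIcc (1 / 2 : ℝ) 1, HasDerivAt g (g₁ x) x)
    (hg₁ : ∀ x ∈ uIcc (1 / 2 : ℝ) 1, HasDerivAt g₁ (g₂ x) x)
    (hg₂ : ∀ x ∈ uIcc (1 / 2 : ℝ) 1, HasDerivAt g₂ (g₃ x) x)
    (hg₃ : IntervalIntegrable g₃ volume (1 / 2) 1) :
    ∫ t in (1 / 2 : ℝ)..1, simpsonKernel t * g₃ t
      = g (1 / 2) / 3 + g 1 / 6 + g₁ (1 / 2) / 24 - ∫ t in (1 / 2 : ℝ)..1, g t := by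
  calc ∫ t in (1 / 2 : ℝ)..1, simpsonKernel t * g₃ t
      = ∫ t in (1 / 2 : ℝ)..1, (1 / 6 * (t - 1) ^ 2 * (t - 1 / 2)) * g₃ t :=
        integral_congr fun t ht => by
          rw [uIcc_of_le (by norm_num)] at ht
          rw [simpsonKernel_of_ge ht.1]
    _ = _ := by
      rw [integral_mul_deriv_three_eq (P := fun t => 1 / 6 * (t - 1) ^ 2 * (t - 1 / 2))
        (P₁ := fun t => t ^ 2 / 2 - 5 / 6 * t + 1 / 3) (P₂ := fun t => t - 5 / 6)
        (P₃ := fun _ => 1)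
        (fun x _ => (((((hasDerivAt_id x).sub_const 1).pow 2).const_mul (1 / 6)).mul
          ((hasDerivAt_id x).sub_const (1 / 2))).congr_deriv (by simp; ring))
        (fun x _ => ((((hasDerivAt_pow 2 x).div_const 2).sub
          ((hasDerivAt_id x).const_mul (5 / 6))).add_const (1 / 3)).congr_deriv (by simp))
        (fun x _ => (hasDerivAt_id x).sub_const _) intervalIntegrable_const hg hg₁ hg₂ hg₃]
      norm_num
      ring

theorem integral_simpsonKernel_mul {g g₁ g₂ g₃ : ℝ → ℝ}
    (hg : ∀ x ∈ Icc (0:ℝ) 1, HasDerivAt g (g₁ x) x)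
    (hg₁ : ∀ x ∈ Icc (0:ℝ) 1, HasDerivAt g₁ (g₂ x) x)
    (hg₂ : ∀ x ∈ Icc (0:ℝ) 1, HasDerivAt g₂ (g₃ x) x)
    (hg₃ : IntervalIntegrable g₃ volume 0 1) :
    ∫ t in (0:ℝ)..1, simpsonKernel t * g₃ t
      = (g 0 + 4 * g (1 / 2) + g 1) / 6 - ∫ t in (0:ℝ)..1, g t := by
  rw [← uIcc_of_le zero_le_one] at hg hg₁ hg₂
  have hL : uIcc (0:ℝ) (1 / 2) ⊆ uIcc 0 1 := uIcc_subset_uIcc (by simp) (by norm_num)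
  have hR : uIcc (1 / 2 : ℝ) 1 ⊆ uIcc 0 1 := uIcc_subset_uIcc (by norm_num) (by simp)
  have hKg : IntervalIntegrable (fun t => simpsonKernel t * g₃ t) volume 0 1 :=
    hg₃.continuousOn_mul continuous_simpsonKernel.continuousOn
  have hgi : IntervalIntegrable g volume 0 1 := (HasDerivAt.continuousOn hg).intervalIntegrable
  rw [← integral_add_adjacent_intervals (hKg.mono_set hL) (hKg.mono_set hR),
    ← integral_add_adjacent_intervals (hgi.mono_set hL) (hgi.mono_set hR),
    integral_zero_half_simpsonKernel_mul (fun x hx => hg x (hL hx)) (fun x hx => hg₁ x (hL hx))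
      (fun x hx => hg₂ x (hL hx)) (hg₃.mono_set hL),
    integral_half_one_simpsonKernel_mul (fun x hx => hg x (hR hx)) (fun x hx => hg₁ x (hR hx))
      (fun x hx => hg₂ x (hR hx)) (hg₃.mono_set hR)]
  ring

theorem lemma12 (a b : ℝ) (hab : a < b) (f f' f'' f''' : ℝ → ℝ)
    (hf : ∀ x ∈ Set.Icc a b, HasDerivAt f (f' x) x)
    (hf' : ∀ x ∈ Set.Icc a b, HasDerivAt f' (f'' x) x)
    (hf'' : ∀ x ∈ Set.Icc a b, HasDerivAt f'' (f''' x) x)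
    (hint : IntegrableOn f''' (Set.Icc a b)) :
    (∫ x in a..b, f x) - ((b - a) / 6) * (f a + 4 * f ((a + b) / 2) + f b)
    = (b - a) ^ 4 *
        ∫ t in (0:ℝ)..1,
          (if t ≤ 1 / 2 then (1 / 6) * t ^ 2 * (t - 1 / 2)
           else (1 / 6) * (t - 1) ^ 2 * (t - 1 / 2)) *
          f''' (t * a + (1 - t) * b) := by
  change _ = _ * ∫ t in (0:ℝ)..1, simpsonKernel t * f''' (t * a + (1 - t) * b)
  rw [← uIcc_of_le hab.le] at hf hf' hf''
  have hf''' : IntervalIntegrable f''' volume a b :=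
    (intervalIntegrable_iff_integrableOn_Icc_of_le hab.le).mpr hint
  have key := integral_simpsonKernel_mul
    (fun t ht => hasDerivAt_comp_segment hf ht)
    (fun t ht => (hasDerivAt_comp_segment hf' ht).const_mul (a - b))
    (fun t ht => ((hasDerivAt_comp_segment hf'' ht).const_mul (a - b)).const_mul (a - b))
    ((((intervalIntegrable_comp_segment hf''').const_mul (a - b)).const_mul (a - b)).const_mul
      (a - b))
  simp only [mul_left_comm (simpsonKernel _), intervalIntegral.integral_const_mul] at key
  norm_num at key
  rw [show 1 / 2 * a + 1 / 2 * b = (a + b) / 2 by ring] at key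
  rw [← integral_comp_segment]
  linear_combination (b - a) * key
end

section
/- Let q ≥ 1 and suppose |f'''|^q belongs to Q([a,b]). Then |∫_a^b f(x) dx - ((b-a)/6)(f(a) + 4f((a+b)/2) + f(b))| ≤ ((b-a)^4/6)(1/192)^{1-1/q} · [ (|f'''(a)|^q/48 + (17/48 - (1/2)ln 2)|f'''(b)|^q)^{1/q} + ((17/48 - (1/2)ln 2)|f'''(a)|^q + |f'''(b)|^q/48)^{1/q} ]. -/
/-!
Three integrations by parts against the Peano kernel `w x = (x - a)² (m - x) / 6` on `[a, m]`,
`m = (a + b) / 2`, applied to `f` and to its reflection `x ↦ f (a + b - x)`, write the Simpson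
error as `∫ₐᵐ w f''' - ∫ₐᵐ w · f''' (a + b - ·)`. Each half is bounded by Hölder's inequality in
the weighted form `∫ w |F| ≤ (∫ w)^(1 - 1/q) (∫ w |F|^q)^(1/q)`, with `∫ₐᵐ w = (b - a)⁴ / 1152`.
Writing `x = λ a + (1 - λ) b`, the Godunova–Levin condition gives
`|F x|^q ≤ |F a|^q (b - a) / (b - x) + |F b|^q (b - a) / (x - a)`, and integrating this against
`w` produces the constant `17/48 - (ln 2)/2`.
-/

open MeasureTheory intervalIntegral Real Set

theorem memLp_ofReal_of_integrable_rpow {α : Type*} [MeasurableSpace α] {μ : Measure α}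
    {f : α → ℝ} {p : ℝ} (hp : 0 < p) (hf : AEStronglyMeasurable f μ)
    (hfp : Integrable (fun x => |f x| ^ p) μ) : MemLp f (ENNReal.ofReal p) μ := by
  rw [← integrable_norm_rpow_iff hf (by simpa using hp) ENNReal.ofReal_ne_top,
    ENNReal.toReal_ofReal hp.le]
  simpa only [Real.norm_eq_abs] using hfp

theorem integral_mul_le_rpow_mul_rpow {α : Type*} [MeasurableSpace α] {μ : Measure α}
    {w G : α → ℝ} {q : ℝ} (hq : 1 ≤ q) (hw0 : 0 ≤ᵐ[μ] w) (hG0 : 0 ≤ᵐ[μ] G)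
    (hw : Integrable w μ) (hG : AEStronglyMeasurable G μ)
    (hwG : Integrable (fun x => w x * G x ^ q) μ) :
    ∫ x, w x * G x ∂μ ≤ (∫ x, w x ∂μ) ^ (1 - 1 / q) * (∫ x, w x * G x ^ q ∂μ) ^ (1 / q) := by
  rcases hq.eq_or_lt with rfl | hq1
  · simp
  set p := q.conjExponent
  have hpq : p.HolderConjugate q := (Real.HolderConjugate.conjExponent hq1).symm
  have hf : MemLp (fun x => w x ^ p⁻¹) (ENNReal.ofReal p) μ := by
    refine memLp_ofReal_of_integrable_rpow hpq.pos
      (hw.aemeasurable.pow_const _).aestronglyMeasurable (hw.congr ?_)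
    filter_upwards [hw0] with x hx
    rw [abs_of_nonneg (Real.rpow_nonneg hx _), Real.rpow_inv_rpow hx hpq.ne_zero]
  have hg : MemLp (fun x => w x ^ q⁻¹ * G x) (ENNReal.ofReal q) μ := by
    refine memLp_ofReal_of_integrable_rpow hpq.symm.pos
      ((hw.aemeasurable.pow_const _).aestronglyMeasurable.mul hG) (hwG.congr ?_)
    filter_upwards [hw0, hG0] with x hx hGx
    rw [abs_of_nonneg (mul_nonneg (Real.rpow_nonneg hx _) hGx),
      Real.mul_rpow (Real.rpow_nonneg hx _) hGx,
      Real.rpow_inv_rpow hx hpq.symm.ne_zero]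
  have holder := integral_mul_le_Lp_mul_Lq_of_nonneg hpq
    (hw0.mono fun x hx => Real.rpow_nonneg hx _)
    (hw0.mp (hG0.mono fun x hGx hx => mul_nonneg (Real.rpow_nonneg hx _) hGx)) hf hg
  have hprod : ∫ x, w x ^ p⁻¹ * (w x ^ q⁻¹ * G x) ∂μ = ∫ x, w x * G x ∂μ := by
    refine integral_congr_ae ?_
    filter_upwards [hw0] with x hx
    rw [← mul_assoc, ← Real.rpow_add' hx (by rw [hpq.inv_add_inv_eq_one]; norm_num),
      hpq.inv_add_inv_eq_one, Real.rpow_one]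
  have hfp : ∫ x, (w x ^ p⁻¹) ^ p ∂μ = ∫ x, w x ∂μ := by
    refine integral_congr_ae ?_
    filter_upwards [hw0] with x hx
    exact Real.rpow_inv_rpow hx hpq.ne_zero
  have hgq : ∫ x, (w x ^ q⁻¹ * G x) ^ q ∂μ = ∫ x, w x * G x ^ q ∂μ := by
    refine integral_congr_ae ?_
    filter_upwards [hw0, hG0] with x hx hGx
    rw [Real.mul_rpow (Real.rpow_nonneg hx _) hGx, Real.rpow_inv_rpow hx hpq.symm.ne_zero]
  have hp : 1 / p = 1 - 1 / q := by
    rw [one_div, one_div]; linarith [hpq.inv_add_inv_eq_one]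
  rwa [hprod, hfp, hgq, hp] at holder

/-- The class `Q(s)` of the paper, without its nonnegativity requirement. -/
def GodunovaLevinOn (s : Set ℝ) (g : ℝ → ℝ) : Prop :=
  ∀ x ∈ s, ∀ y ∈ s, ∀ l ∈ Ioo (0 : ℝ) 1, g (l * x + (1 - l) * y) ≤ g x / l + g y / (1 - l)

theorem GodunovaLevinOn.comp_const_add_sub {a b : ℝ} {g : ℝ → ℝ}
    (hg : GodunovaLevinOn (Icc a b) g) : GodunovaLevinOn (Icc a b) (fun x => g (a + b - x)) := by
  intro x hx y hy l hl
  have hmem : ∀ z ∈ Icc a b, a + b - z ∈ Icc a b := fun z hz =>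
    ⟨by linarith [hz.2], by linarith [hz.1]⟩
  convert hg _ (hmem x hx) _ (hmem y hy) l hl using 2
  ring

theorem GodunovaLevinOn.le_of_mem_Ioo {a b x : ℝ} {g : ℝ → ℝ}
    (hg : GodunovaLevinOn (Icc a b) g) (hx : x ∈ Ioo a b) :
    g x ≤ g a * (b - a) / (b - x) + g b * (b - a) / (x - a) := by
  obtain ⟨hax, hxb⟩ := hx
  have hab : a ≤ b := by linarith
  have hl : (b - x) / (b - a) ∈ Ioo (0 : ℝ) 1 :=
    ⟨div_pos (by linarith) (by linarith), (div_lt_one (by linarith)).2 (by linarith)⟩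
  have key := hg a (left_mem_Icc.2 hab) b (right_mem_Icc.2 hab) _ hl
  have hba : b - a ≠ 0 := by linarith
  have h1 : 1 - (b - x) / (b - a) = (x - a) / (b - a) := by field_simp; ring
  rwa [h1, div_div_eq_mul_div, div_div_eq_mul_div,
    show (b - x) / (b - a) * a + (x - a) / (b - a) * b = x by field_simp; ring] at key

theorem integral_mul_third_deriv_eq {a b : ℝ} {u u' u'' u''' v v' v'' v''' : ℝ → ℝ}
    (hu : ∀ x ∈ uIcc a b, HasDerivAt u (u' x) x)
    (hu' : ∀ x ∈ uIcc a b, HasDerivAt u' (u'' x) x)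
    (hu'' : ∀ x ∈ uIcc a b, HasDerivAt u'' (u''' x) x)
    (hv : ∀ x ∈ uIcc a b, HasDerivAt v (v' x) x)
    (hv' : ∀ x ∈ uIcc a b, HasDerivAt v' (v'' x) x)
    (hv'' : ∀ x ∈ uIcc a b, HasDerivAt v'' (v''' x) x)
    (hu'i : IntervalIntegrable u' volume a b) (hu''i : IntervalIntegrable u'' volume a b)
    (hu'''i : IntervalIntegrable u''' volume a b) (hv'''i : IntervalIntegrable v''' volume a b) :
    ∫ x in a..b, u x * v''' x
      = u b * v'' b - u a * v'' a - (u' b * v' b - u' a * v' a) + (u'' b * v b - u'' a * v a)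
        - ∫ x in a..b, u''' x * v x := by
  have hv'i : IntervalIntegrable v' volume a b :=
    ContinuousOn.intervalIntegrable fun x hx => (hv' x hx).continuousAt.continuousWithinAt
  have hv''i : IntervalIntegrable v'' volume a b :=
    ContinuousOn.intervalIntegrable fun x hx => (hv'' x hx).continuousAt.continuousWithinAt
  rw [integral_mul_deriv_eq_deriv_mul hu hv'' hu'i hv'''i,
    integral_mul_deriv_eq_deriv_mul hu' hv' hu''i hv''i,
    integral_mul_deriv_eq_deriv_mul hu'' hv hu'''i hv'i]
  ring

theorem integral_peano_kernel_mul_third_deriv {a c : ℝ} {f f' f'' f''' : ℝ → ℝ}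
    (hf : ∀ x ∈ uIcc a c, HasDerivAt f (f' x) x)
    (hf' : ∀ x ∈ uIcc a c, HasDerivAt f' (f'' x) x)
    (hf'' : ∀ x ∈ uIcc a c, HasDerivAt f'' (f''' x) x)
    (hint : IntervalIntegrable f''' volume a c) :
    ∫ x in a..c, (x - a) ^ 2 * (c - x) / 6 * f''' x
      = (∫ x in a..c, f x) + (c - a) ^ 2 / 6 * f' c - 2 * (c - a) / 3 * f c
        - (c - a) / 3 * f a := by
  have hu : ∀ x, HasDerivAt (fun y => (y - a) ^ 2 * (c - y) / 6)
      ((x - a) * (2 * c + a - 3 * x) / 6) x := fun x =>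
    ((((hasDerivAt_id x).sub_const a).pow 2).mul ((hasDerivAt_id x).const_sub c)).div_const 6
      |>.congr_deriv (by simp only [id_eq, Pi.pow_apply]; ring)
  have hu' : ∀ x, HasDerivAt (fun y => (y - a) * (2 * c + a - 3 * y) / 6)
      ((c + 2 * a - 3 * x) / 3) x := fun x =>
    (((hasDerivAt_id x).sub_const a).mul
      (((hasDerivAt_id x).const_mul 3).const_sub (2 * c + a))).div_const 6
      |>.congr_deriv (by simp only [id_eq]; ring)
  have hu'' : ∀ x, HasDerivAt (fun y => (c + 2 * a - 3 * y) / 3) (-1) x := fun x =>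
    (((hasDerivAt_id x).const_mul 3).const_sub (c + 2 * a)).div_const 3
      |>.congr_deriv (by ring)
  rw [integral_mul_third_deriv_eq (fun x _ => hu x) (fun x _ => hu' x) (fun x _ => hu'' x)
    hf hf' hf'' (Continuous.intervalIntegrable (by fun_prop) _ _)
    (Continuous.intervalIntegrable (by fun_prop) _ _) intervalIntegrable_const hint]
  simp only [neg_one_mul, intervalIntegral.integral_neg]
  ring

theorem MeasureTheory.IntegrableOn.comp_const_add_sub {a b : ℝ} {F : ℝ → ℝ}
    (hF : IntegrableOn F (Icc a b)) :
    IntegrableOn (fun x => F (a + b - x)) (Icc a b) := by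
  rcases lt_or_ge b a with hba | hab
  · simp [Icc_eq_empty_of_lt hba]
  have h := ((intervalIntegrable_iff_integrableOn_Icc_of_le hab).2 hF).comp_sub_left (a + b)
  rw [add_sub_cancel_right, add_sub_cancel_left] at h
  exact (intervalIntegrable_iff_integrableOn_Icc_of_le hab).1 h.symm

theorem simpson_error_eq_integral_peano_kernel_mul_third_deriv {a b : ℝ} (hab : a ≤ b)
    {f f' f'' f''' : ℝ → ℝ}
    (hf : ∀ x ∈ Icc a b, HasDerivAt f (f' x) x)
    (hf' : ∀ x ∈ Icc a b, HasDerivAt f' (f'' x) x)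
    (hf'' : ∀ x ∈ Icc a b, HasDerivAt f'' (f''' x) x)
    (hint : IntegrableOn f''' (Icc a b)) :
    (∫ x in a..b, f x) - (b - a) / 6 * (f a + 4 * f ((a + b) / 2) + f b)
      = (∫ x in a..(a + b) / 2, (x - a) ^ 2 * ((a + b) / 2 - x) / 6 * f''' x)
        - ∫ x in a..(a + b) / 2, (x - a) ^ 2 * ((a + b) / 2 - x) / 6 * f''' (a + b - x) := by
  have ham : a ≤ (a + b) / 2 := by linarith
  have hmb : (a + b) / 2 ≤ b := by linarith
  have hsub : uIcc a ((a + b) / 2) ⊆ Icc a b := by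
    rw [uIcc_of_le ham]; exact Icc_subset_Icc le_rfl hmb
  have hmem : ∀ x ∈ uIcc a ((a + b) / 2), a + b - x ∈ Icc a b := fun x hx =>
    ⟨by linarith [(hsub hx).2], by linarith [(hsub hx).1]⟩
  have hL := integral_peano_kernel_mul_third_deriv (fun x hx => hf x (hsub hx))
    (fun x hx => hf' x (hsub hx)) (fun x hx => hf'' x (hsub hx)) (hint.mono_set hsub).intervalIntegrable
  -- the right half of the rule is the left half for the reflection of `f`
  have hR := integral_peano_kernel_mul_third_deriv (f := fun x => f (a + b - x))
    (f' := fun x => -f' (a + b - x)) (f'' := fun x => f'' (a + b - x))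
    (f''' := fun x => -f''' (a + b - x))
    (fun x hx => (hf _ (hmem x hx)).comp_const_sub (a + b) x)
    (fun x hx => ((hf' _ (hmem x hx)).comp_const_sub (a + b) x).neg.congr_deriv (neg_neg _))
    (fun x hx => (hf'' _ (hmem x hx)).comp_const_sub (a + b) x)
    (hint.comp_const_add_sub.mono_set hsub).intervalIntegrable.neg
  have hfc : ContinuousOn f (Icc a b) := fun x hx => (hf x hx).continuousAt.continuousWithinAt
  have hsplit := integral_add_adjacent_intervals (μ := volume)
    (hfc.mono hsub).intervalIntegrable
    (hfc.mono (by rw [uIcc_of_le hmb]; exact Icc_subset_Icc ham le_rfl)).intervalIntegrable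
  have hflip : ∫ x in a..(a + b) / 2, f (a + b - x) = ∫ x in (a + b) / 2..b, f x := by
    rw [integral_comp_sub_left, add_sub_cancel_left,
      show a + b - (a + b) / 2 = (a + b) / 2 by ring]
  simp only [mul_neg, intervalIntegral.integral_neg, hflip, add_sub_cancel_left,
    show a + b - (a + b) / 2 = (a + b) / 2 by ring] at hR
  linear_combination -hL - hR - hsplit

theorem integral_sq_mul_sub (a c : ℝ) : ∫ x in a..c, (x - a) ^ 2 * (c - x) = (c - a) ^ 4 / 12 := by
  have hderiv : ∀ x, HasDerivAt (fun y => (c - a) * (y - a) ^ 3 / 3 - (y - a) ^ 4 / 4)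
      ((x - a) ^ 2 * (c - x)) x := fun x =>
    ((((hasDerivAt_id x).sub_const a).pow 3).const_mul (c - a)).div_const 3 |>.sub
      ((((hasDerivAt_id x).sub_const a).pow 4).div_const 4)
      |>.congr_deriv (by simp only [id_eq]; push_cast; ring)
  rw [integral_eq_sub_of_hasDerivAt (fun x _ => hderiv x)
    (Continuous.intervalIntegrable (by fun_prop) _ _)]
  ring

theorem integral_mul_sub (a c : ℝ) : ∫ x in a..c, (x - a) * (c - x) = (c - a) ^ 3 / 6 := by
  have hderiv : ∀ x, HasDerivAt (fun y => (c - a) * (y - a) ^ 2 / 2 - (y - a) ^ 3 / 3)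
      ((x - a) * (c - x)) x := fun x =>
    ((((hasDerivAt_id x).sub_const a).pow 2).const_mul (c - a)).div_const 2 |>.sub
      ((((hasDerivAt_id x).sub_const a).pow 3).div_const 3)
      |>.congr_deriv (by simp only [id_eq]; push_cast; ring)
  rw [integral_eq_sub_of_hasDerivAt (fun x _ => hderiv x)
    (Continuous.intervalIntegrable (by fun_prop) _ _)]
  ring

theorem continuousOn_sq_mul_sub_div_sub {a b : ℝ} (hab : a < b) :
    ContinuousOn (fun x => (x - a) ^ 2 * ((a + b) / 2 - x) / (b - x)) (uIcc a ((a + b) / 2)) := by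
  refine ContinuousOn.div (by fun_prop) (by fun_prop) fun x hx => ?_
  rw [uIcc_of_le (by linarith)] at hx
  linarith [hx.2]

theorem integral_sq_mul_sub_div_sub {a b : ℝ} (hab : a < b) :
    ∫ x in a..(a + b) / 2, (x - a) ^ 2 * ((a + b) / 2 - x) / (b - x)
      = (b - a) ^ 3 * (17 / 48 - log 2 / 2) := by
  have hb : ∀ x ∈ uIcc a ((a + b) / 2), b - x ≠ 0 := by
    intro x hx
    rw [uIcc_of_le (by linarith)] at hx
    linarith [hx.2]
  have hderiv : ∀ x ∈ uIcc a ((a + b) / 2), HasDerivAt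
      (fun y => -(b - y) ^ 3 / 3 + 5 * (b - a) / 4 * (b - y) ^ 2 - 2 * (b - a) ^ 2 * (b - y)
        + (b - a) ^ 3 / 2 * log (b - y))
      ((x - a) ^ 2 * ((a + b) / 2 - x) / (b - x)) x := by
    intro x hx
    have hbx := (hasDerivAt_id x).const_sub b
    refine ((((hbx.pow 3).neg.div_const 3).add ((hbx.pow 2).const_mul _)).sub
      (hbx.const_mul _)).add ((hbx.log (hb x hx)).const_mul _) |>.congr_deriv ?_
    simp only [id_eq]
    field_simp [hb x hx]
    ring
  rw [integral_eq_sub_of_hasDerivAt hderiv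
      (continuousOn_sq_mul_sub_div_sub hab).intervalIntegrable,
    show b - (a + b) / 2 = (b - a) / 2 by ring, log_div (by linarith) two_ne_zero]
  ring

theorem integral_peano_kernel_mul_endpoint_bound {a b : ℝ} (hab : a < b) (A B : ℝ) :
    ∫ x in a..(a + b) / 2, (b - a) / 6 * (A * ((x - a) ^ 2 * ((a + b) / 2 - x) / (b - x))
        + B * ((x - a) * ((a + b) / 2 - x)))
      = (b - a) ^ 4 / 6 * ((17 / 48 - 1 / 2 * log 2) * A + B / 48) := by
  rw [intervalIntegral.integral_const_mul, intervalIntegral.integral_add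
    ((continuousOn_sq_mul_sub_div_sub hab).intervalIntegrable.const_mul _)
    ((Continuous.intervalIntegrable (by fun_prop) _ _).const_mul _)]
  simp only [intervalIntegral.integral_const_mul, integral_sq_mul_sub_div_sub hab,
    integral_mul_sub]
  ring

theorem mul_rpow_one_sub_mul_mul_rpow {C X Y : ℝ} (r : ℝ) (hC : 0 ≤ C) (hX : 0 ≤ X)
    (hY : 0 ≤ Y) :
    (C * X) ^ (1 - r) * (C * Y) ^ r = C * (X ^ (1 - r) * Y ^ r) := by
  rw [mul_rpow hC hX, mul_rpow hC hY, mul_mul_mul_comm, ← rpow_add' hC (by norm_num),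
    sub_add_cancel, rpow_one]

theorem abs_intervalIntegral_mul_le_rpow_mul_rpow {a c q : ℝ} {w F : ℝ → ℝ} (hac : a ≤ c)
    (hq : 1 ≤ q) (hw0 : ∀ x ∈ Ioc a c, 0 ≤ w x) (hw : IntervalIntegrable w volume a c)
    (hF : AEStronglyMeasurable F (volume.restrict (Ioc a c)))
    (hwF : IntegrableOn (fun x => w x * |F x| ^ q) (Ioc a c)) :
    |∫ x in a..c, w x * F x|
      ≤ (∫ x in a..c, w x) ^ (1 - 1 / q) * (∫ x in a..c, w x * |F x| ^ q) ^ (1 / q) := by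
  simp only [intervalIntegral.integral_of_le hac]
  calc |∫ x in Ioc a c, w x * F x|
      ≤ ∫ x in Ioc a c, w x * |F x| := by
        refine abs_integral_le_integral_abs.trans_eq
          (setIntegral_congr_fun measurableSet_Ioc fun x hx => ?_)
        rw [abs_mul, abs_of_nonneg (hw0 x hx)]
    _ ≤ _ := integral_mul_le_rpow_mul_rpow hq ((ae_restrict_mem measurableSet_Ioc).mono hw0)
        (Filter.Eventually.of_forall fun x => abs_nonneg _) hw.1
        hF.aemeasurable.abs.aestronglyMeasurable hwF

theorem abs_integral_peano_kernel_mul_le {a b q : ℝ} {F : ℝ → ℝ} (hab : a < b) (hq : 1 ≤ q)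
    (hF : IntegrableOn F (Icc a b)) (hGL : GodunovaLevinOn (Icc a b) fun x => |F x| ^ q) :
    |∫ x in a..(a + b) / 2, (x - a) ^ 2 * ((a + b) / 2 - x) / 6 * F x|
      ≤ (b - a) ^ 4 / 6 * (1 / 192) ^ (1 - 1 / q) *
        ((17 / 48 - 1 / 2 * log 2) * |F a| ^ q + |F b| ^ q / 48) ^ (1 / q) := by
  set m := (a + b) / 2 with hm
  have ham : a ≤ m := by linarith
  have hmb : m < b := by linarith
  set w : ℝ → ℝ := fun x => (x - a) ^ 2 * (m - x) / 6 with hw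
  -- `w` times the Godunova–Levin bound, with the factor `x - a` cancelled
  set φ : ℝ → ℝ := fun x => (b - a) / 6 * (|F a| ^ q * ((x - a) ^ 2 * (m - x) / (b - x))
    + |F b| ^ q * ((x - a) * (m - x))) with hφ
  have hw0 : ∀ x ∈ Ioc a m, 0 ≤ w x := fun x hx => by
    have : 0 ≤ m - x := by linarith [hx.2]
    positivity
  have hbound : ∀ x ∈ Ioc a m, w x * |F x| ^ q ≤ φ x := by
    intro x hx
    have hxa : x - a ≠ 0 := by linarith [hx.1]
    have hbx : b - x ≠ 0 := by linarith [hx.2]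
    calc w x * |F x| ^ q
        ≤ w x * (|F a| ^ q * (b - a) / (b - x) + |F b| ^ q * (b - a) / (x - a)) :=
          mul_le_mul_of_nonneg_left (hGL.le_of_mem_Ioo ⟨hx.1, by linarith [hx.2]⟩) (hw0 x hx)
      _ = φ x := by simp only [hw, hφ]; field_simp
  have hFm : AEStronglyMeasurable F (volume.restrict (Ioc a m)) :=
    (hF.mono_set (Ioc_subset_Icc_self.trans (Icc_subset_Icc le_rfl hmb.le))).aestronglyMeasurable
  have hwi : IntervalIntegrable w volume a m := Continuous.intervalIntegrable (by fun_prop) _ _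
  have hφi : IntervalIntegrable φ volume a m :=
    (((continuousOn_sq_mul_sub_div_sub hab).intervalIntegrable.const_mul _).add
      ((Continuous.intervalIntegrable (by fun_prop) _ _).const_mul _)).const_mul _
  have hwFq : IntegrableOn (fun x => w x * |F x| ^ q) (Ioc a m) := by
    refine Integrable.mono' hφi.1
      (hwi.1.aestronglyMeasurable.mul (hFm.aemeasurable.abs.pow_const _).aestronglyMeasurable)
      ((ae_restrict_mem measurableSet_Ioc).mono fun x hx => ?_)
    rw [Real.norm_of_nonneg (mul_nonneg (hw0 x hx) (by positivity))]
    exact hbound x hx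
  have hW : ∫ x in a..m, w x = (b - a) ^ 4 / 6 * (1 / 192) := by
    simp only [hw, intervalIntegral.integral_div, integral_sq_mul_sub, hm]
    ring
  have hwFq_le : ∫ x in a..m, w x * |F x| ^ q ≤ ∫ x in a..m, φ x := by
    simp only [intervalIntegral.integral_of_le ham]
    exact setIntegral_mono_on hwFq hφi.1 measurableSet_Ioc hbound
  have hwFq_nonneg : 0 ≤ ∫ x in a..m, w x * |F x| ^ q := by
    rw [intervalIntegral.integral_of_le ham]
    exact setIntegral_nonneg measurableSet_Ioc fun x hx => mul_nonneg (hw0 x hx) (by positivity)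
  have hS : 0 ≤ (17 / 48 - 1 / 2 * log 2) * |F a| ^ q + |F b| ^ q / 48 := by
    have : 0 ≤ 17 / 48 - 1 / 2 * log 2 := by linarith [log_two_lt_d9]
    positivity
  calc |∫ x in a..m, w x * F x|
      ≤ (∫ x in a..m, w x) ^ (1 - 1 / q) * (∫ x in a..m, w x * |F x| ^ q) ^ (1 / q) :=
        abs_intervalIntegral_mul_le_rpow_mul_rpow ham hq hw0 hwi hFm hwFq
    _ ≤ (∫ x in a..m, w x) ^ (1 - 1 / q) * (∫ x in a..m, φ x) ^ (1 / q) := by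
        rw [hW]
        gcongr
    _ = _ := by
        rw [hW, hφ, integral_peano_kernel_mul_endpoint_bound hab,
          mul_rpow_one_sub_mul_mul_rpow _ (by positivity) (by norm_num) hS]
        ring

theorem thm24 (a b : ℝ) (hab : a < b) (q : ℝ) (hq : 1 ≤ q)
    (f f' f'' f''' : ℝ → ℝ)
    (hf : ∀ x ∈ Set.Icc a b, HasDerivAt f (f' x) x)
    (hf' : ∀ x ∈ Set.Icc a b, HasDerivAt f' (f'' x) x)
    (hf'' : ∀ x ∈ Set.Icc a b, HasDerivAt f'' (f''' x) x)
    (hint : IntegrableOn f''' (Set.Icc a b))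
    (hQ : ∀ x ∈ Set.Icc a b, ∀ y ∈ Set.Icc a b, ∀ l ∈ Set.Ioo (0:ℝ) 1,
      |f''' (l * x + (1 - l) * y)| ^ q ≤ |f''' x| ^ q / l + |f''' y| ^ q / (1 - l)) :
    |(∫ x in a..b, f x) - ((b - a) / 6) * (f a + 4 * f ((a + b) / 2) + f b)|
    ≤ ((b - a) ^ 4 / 6) * (1 / 192) ^ (1 - 1 / q) *
        ((|f''' a| ^ q / 48 + (17 / 48 - (1 / 2) * Real.log 2) * |f''' b| ^ q) ^ (1 / q)
          + ((17 / 48 - (1 / 2) * Real.log 2) * |f''' a| ^ q + |f''' b| ^ q / 48) ^ (1 / q)) := by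
  have hGL : GodunovaLevinOn (Icc a b) fun x => |f''' x| ^ q := hQ
  have hleft := abs_integral_peano_kernel_mul_le hab hq hint hGL
  have hright :=
    abs_integral_peano_kernel_mul_le hab hq hint.comp_const_add_sub hGL.comp_const_add_sub
  simp only [add_sub_cancel_left, add_sub_cancel_right] at hright
  rw [simpson_error_eq_integral_peano_kernel_mul_third_deriv hab.le hf hf' hf'' hint]
  calc _ ≤ _ := abs_sub _ _
    _ ≤ _ := add_le_add hleft hright
    _ = _ := by ring_nf
end

section
/- If g belongs to the Godunova-Levin class Q(I) on an interval I, then for all t ∈ (0,1) and x, y ∈ I, g(tx + (1-t)y) ≤ g(x)/t + g(y)/(1-t); consequently ∫_0^1 t(1-t)|2t-1| g(ta + (1-t)b) dt ≤ (1/4)(g(a) + g(b)) for a, b ∈ I, provided the integral on the left exists. -/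
/-!
Multiplying the Godunova–Levin inequality at `t` by the weight `t (1 - t) |2t - 1|` clears both
denominators, so on `(0, 1)` the integrand is bounded by `|2t - 1| ((1 - t) g(a) + t g(b))`, and
`∫₀¹ |2t - 1| (1 - t) dt = ∫₀¹ |2t - 1| t dt = 1/4`.
-/

open MeasureTheory Set

theorem integral_one_sub_two_mul_mul_affine (c d a b : ℝ) :
    ∫ t in a..b, (1 - 2 * t) * ((1 - t) * c + t * d) =
      (c * (b - 3 / 2 * b ^ 2 + 2 / 3 * b ^ 3) + d * (b ^ 2 / 2 - 2 / 3 * b ^ 3)) -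
        (c * (a - 3 / 2 * a ^ 2 + 2 / 3 * a ^ 3) + d * (a ^ 2 / 2 - 2 / 3 * a ^ 3)) := by
  refine intervalIntegral.integral_eq_sub_of_hasDerivAt
    (f := fun t => c * (t - 3 / 2 * t ^ 2 + 2 / 3 * t ^ 3) + d * (t ^ 2 / 2 - 2 / 3 * t ^ 3))
    (fun t _ => ?_) (Continuous.intervalIntegrable (by fun_prop) _ _)
  refine ((((hasDerivAt_id t).sub ((hasDerivAt_pow 2 t).const_mul (3 / 2))).add
    ((hasDerivAt_pow 3 t).const_mul (2 / 3))).const_mul c).add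
    ((((hasDerivAt_pow 2 t).div_const 2).sub ((hasDerivAt_pow 3 t).const_mul (2 / 3))).const_mul d)
    |>.congr_deriv ?_
  push_cast
  ring

theorem integral_abs_two_mul_sub_one_mul_affine (c d : ℝ) :
    ∫ t in (0 : ℝ)..1, |2 * t - 1| * ((1 - t) * c + t * d) = (c + d) / 4 := by
  have hcont : Continuous fun t : ℝ => |2 * t - 1| * ((1 - t) * c + t * d) := by fun_prop
  have left : ∫ t in (0 : ℝ)..1 / 2, |2 * t - 1| * ((1 - t) * c + t * d) =
      5 / 24 * c + 1 / 24 * d := by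
    rw [intervalIntegral.integral_congr (g := fun t => (1 - 2 * t) * ((1 - t) * c + t * d)),
      integral_one_sub_two_mul_mul_affine]
    · ring
    · intro t ht
      rw [uIcc_of_le (by norm_num)] at ht
      simp only [abs_of_nonpos (by linarith [ht.2] : 2 * t - 1 ≤ 0)]
      ring
  have right : ∫ t in (1 / 2 : ℝ)..1, |2 * t - 1| * ((1 - t) * c + t * d) =
      1 / 24 * c + 5 / 24 * d := by
    rw [intervalIntegral.integral_congr (g := fun t => -((1 - 2 * t) * ((1 - t) * c + t * d))),
      intervalIntegral.integral_neg, integral_one_sub_two_mul_mul_affine]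
    · ring
    · intro t ht
      rw [uIcc_of_le (by norm_num)] at ht
      simp only [abs_of_nonneg (by linarith [ht.1] : 0 ≤ 2 * t - 1)]
      ring
  rw [← intervalIntegral.integral_add_adjacent_intervals (b := 1 / 2)
    (hcont.intervalIntegrable _ _) (hcont.intervalIntegrable _ _), left, right]
  ring

theorem mul_le_of_le_div_add_div {t u p q w : ℝ} (ht : t ∈ Ioo (0 : ℝ) 1) (hw : 0 ≤ w)
    (h : u ≤ p / t + q / (1 - t)) :
    t * (1 - t) * w * u ≤ w * ((1 - t) * p + t * q) := by
  have ht0 : t ≠ 0 := ht.1.ne'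
  have ht1 : 1 - t ≠ 0 := (sub_pos.2 ht.2).ne'
  calc t * (1 - t) * w * u ≤ t * (1 - t) * w * (p / t + q / (1 - t)) :=
        mul_le_mul_of_nonneg_left h
          (mul_nonneg (mul_nonneg ht.1.le (sub_pos.2 ht.2).le) hw)
    _ = w * ((1 - t) * p + t * q) := by field_simp

theorem integral_weight_mul_le_of_le_div_add_div {g : ℝ → ℝ} {a b : ℝ}
    (hQ : ∀ l ∈ Ioo (0 : ℝ) 1, g (l * a + (1 - l) * b) ≤ g a / l + g b / (1 - l))
    (hint : IntervalIntegrable (fun t => t * (1 - t) * |2 * t - 1| * g (t * a + (1 - t) * b))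
      volume 0 1) :
    (∫ t in (0 : ℝ)..1, t * (1 - t) * |2 * t - 1| * g (t * a + (1 - t) * b)) ≤
      1 / 4 * (g a + g b) := by
  have hcont : Continuous fun t : ℝ => |2 * t - 1| * ((1 - t) * g a + t * g b) := by fun_prop
  calc (∫ t in (0 : ℝ)..1, t * (1 - t) * |2 * t - 1| * g (t * a + (1 - t) * b))
      ≤ ∫ t in (0 : ℝ)..1, |2 * t - 1| * ((1 - t) * g a + t * g b) :=
        intervalIntegral.integral_mono_on_of_le_Ioo zero_le_one hint
          (hcont.intervalIntegrable _ _)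
          fun t ht => mul_le_of_le_div_add_div ht (abs_nonneg _) (hQ t ht)
    _ = 1 / 4 * (g a + g b) := by
        rw [integral_abs_two_mul_sub_one_mul_affine]
        ring

theorem GL_bound_general (I : Set ℝ) (g : ℝ → ℝ)
    (hQ : ∀ x ∈ I, ∀ y ∈ I, ∀ l ∈ Set.Ioo (0:ℝ) 1,
      g (l * x + (1 - l) * y) ≤ g x / l + g y / (1 - l)) :
    (∀ t ∈ Set.Ioo (0:ℝ) 1, ∀ x ∈ I, ∀ y ∈ I,
      g (t * x + (1 - t) * y) ≤ g x / t + g y / (1 - t)) ∧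
    ∀ a ∈ I, ∀ b ∈ I,
      IntervalIntegrable (fun t => t * (1 - t) * |2 * t - 1| * g (t * a + (1 - t) * b))
        volume 0 1 →
      (∫ t in (0:ℝ)..1, t * (1 - t) * |2 * t - 1| * g (t * a + (1 - t) * b))
        ≤ (1 / 4) * (g a + g b) :=
  ⟨fun t ht x hx y hy => hQ x hx y hy t ht, fun a ha b hb =>
    integral_weight_mul_le_of_le_div_add_div fun l hl => hQ a ha b hb l hl⟩

theorem GL_bound (I : Set ℝ) (hI : I.OrdConnected) (g : ℝ → ℝ)
    (hg0 : ∀ x ∈ I, 0 ≤ g x)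
    (hQ : ∀ x ∈ I, ∀ y ∈ I, ∀ l ∈ Set.Ioo (0:ℝ) 1,
      g (l * x + (1 - l) * y) ≤ g x / l + g y / (1 - l)) :
    (∀ t ∈ Set.Ioo (0:ℝ) 1, ∀ x ∈ I, ∀ y ∈ I,
      g (t * x + (1 - t) * y) ≤ g x / t + g y / (1 - t)) ∧
    ∀ a ∈ I, ∀ b ∈ I,
      IntervalIntegrable (fun t => t * (1 - t) * |2 * t - 1| * g (t * a + (1 - t) * b))
        volume 0 1 →
      (∫ t in (0:ℝ)..1, t * (1 - t) * |2 * t - 1| * g (t * a + (1 - t) * b))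
        ≤ (1 / 4) * (g a + g b) :=
  GL_bound_general I g hQ
end
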